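/- arXiv:1904.06185 — 2 statements merged into one kernel-verified Lean document; each statement's English description precedes it below -/
import Mathlib

section
/- For probability densities p and q with respect to a dominating measure μ with 0 < q ≤ 1 μ-a.e., it holds that ∫ log((p + q)/(2q)) q dμ ≤ −∫ (√((p+q)/2) − √q)² dμ + (1/2)(∫ p dμ − 1). In particular, if p is also a probability density, then ∫ log((p+q)/(2q)) q dμ ≤ −∫ (√((p+q)/2) − √q)² dμ ≤ 0. -/
/-!
Pointwise, `log x ≤ 2 (√x - 1)` at `x = a / b` with `a = (p + q) / 2`, `b = q` gives
`log (a / b) * b ≤ 2 (√a √b - b) = -(√a - √b)² + (a - b)`. Integrating, the last term contributes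
`(∫ p - ∫ q) / 2 = (∫ p - 1) / 2`.
-/

open MeasureTheory

theorem Real.log_le_two_mul_sqrt_sub_one {x : ℝ} (hx : 0 < x) :
    Real.log x ≤ 2 * (Real.sqrt x - 1) := by
  have h := Real.log_le_sub_one_of_pos (Real.sqrt_pos.mpr hx)
  rw [Real.log_sqrt hx.le] at h
  linarith

theorem Real.log_div_mul_le_neg_sq_sqrt_sub_add {a b : ℝ} (ha : 0 < a) (hb : 0 < b) :
    Real.log (a / b) * b ≤ -(Real.sqrt a - Real.sqrt b) ^ 2 + (a - b) := by
  calc Real.log (a / b) * b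
      ≤ 2 * (Real.sqrt (a / b) - 1) * b :=
        mul_le_mul_of_nonneg_right (Real.log_le_two_mul_sqrt_sub_one (div_pos ha hb)) hb.le
    _ = 2 * (Real.sqrt a * Real.sqrt b - b) := by
        rw [Real.sqrt_div' a hb.le]
        field_simp [(Real.sqrt_pos.mpr hb).ne']
        linear_combination (-Real.sqrt a) * Real.sq_sqrt hb.le
    _ = -(Real.sqrt a - Real.sqrt b) ^ 2 + (a - b) := by
        linear_combination Real.sq_sqrt ha.le + Real.sq_sqrt hb.le

theorem hellinger_log_bound_general {α : Type*} [MeasurableSpace α] (μ : Measure α)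
    (p q : α → ℝ)
    (hp0 : ∀ x, 0 ≤ p x) (hq01 : ∀ᵐ x ∂μ, 0 < q x ∧ q x ≤ 1)
    (hqint : ∫ x, q x ∂μ = 1) (hpint : Integrable p μ)
    (hlogint : Integrable (fun x => Real.log ((p x + q x) / (2 * q x)) * q x) μ)
    (hsqint : Integrable
      (fun x => (Real.sqrt ((p x + q x) / 2) - Real.sqrt (q x)) ^ 2) μ) :
    (∫ x, Real.log ((p x + q x) / (2 * q x)) * q x ∂μ ≤
      -∫ x, (Real.sqrt ((p x + q x) / 2) - Real.sqrt (q x)) ^ 2 ∂μ +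
        (1 / 2) * ((∫ x, p x ∂μ) - 1)) ∧
    ((∫ x, p x ∂μ) = 1 →
      (∫ x, Real.log ((p x + q x) / (2 * q x)) * q x ∂μ ≤
        -∫ x, (Real.sqrt ((p x + q x) / 2) - Real.sqrt (q x)) ^ 2 ∂μ) ∧
      -∫ x, (Real.sqrt ((p x + q x) / 2) - Real.sqrt (q x)) ^ 2 ∂μ ≤ 0) := by
  have hqI : Integrable q μ := .of_integral_ne_zero (by simp [hqint])
  have hdiffI : Integrable (fun x => (p x - q x) / 2) μ := (hpint.sub hqI).div_const 2
  have hnegI : Integrable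
      (fun x => -(Real.sqrt ((p x + q x) / 2) - Real.sqrt (q x)) ^ 2) μ := hsqint.neg
  have hpointwise : ∀ᵐ x ∂μ, Real.log ((p x + q x) / (2 * q x)) * q x ≤
      -(Real.sqrt ((p x + q x) / 2) - Real.sqrt (q x)) ^ 2 + (p x - q x) / 2 := by
    filter_upwards [hq01] with x hqx
    have hmid : 0 < (p x + q x) / 2 := by linarith [hp0 x]
    have h := Real.log_div_mul_le_neg_sq_sqrt_sub_add hmid hqx.1
    rwa [div_div, show (p x + q x) / 2 - q x = (p x - q x) / 2 by ring] at h
  have hbound : ∫ x, Real.log ((p x + q x) / (2 * q x)) * q x ∂μ ≤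
      ∫ x, (-(Real.sqrt ((p x + q x) / 2) - Real.sqrt (q x)) ^ 2 + (p x - q x) / 2) ∂μ :=
    integral_mono_ae hlogint (hnegI.add hdiffI) hpointwise
  rw [integral_add hnegI hdiffI, integral_neg, integral_div, integral_sub hpint hqI,
    hqint] at hbound
  have hsq_nonneg : 0 ≤ ∫ x, (Real.sqrt ((p x + q x) / 2) - Real.sqrt (q x)) ^ 2 ∂μ :=
    integral_nonneg fun x => sq_nonneg _
  refine ⟨by linarith, fun hp1 => ⟨by rw [hp1] at hbound; linarith, by linarith⟩⟩

/-- Hellinger-type inequality: for densities `p, q` w.r.t. `μ` with `0 < q ≤ 1` a.e.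
and `∫ q = 1`, one has
`∫ log((p+q)/(2q)) q dμ ≤ −∫ (√((p+q)/2) − √q)² dμ + (1/2)(∫ p dμ − 1)`;
if moreover `∫ p = 1`, then
`∫ log((p+q)/(2q)) q dμ ≤ −∫ (√((p+q)/2) − √q)² dμ ≤ 0`. -/
theorem hellinger_log_bound {α : Type*} [MeasurableSpace α] (μ : Measure α)
    (p q : α → ℝ) (hp : Measurable p) (hq : Measurable q)
    (hp0 : ∀ x, 0 ≤ p x) (hq01 : ∀ᵐ x ∂μ, 0 < q x ∧ q x ≤ 1)
    (hqint : ∫ x, q x ∂μ = 1) (hpint : Integrable p μ)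
    (hlogint : Integrable (fun x => Real.log ((p x + q x) / (2 * q x)) * q x) μ)
    (hsqint : Integrable
      (fun x => (Real.sqrt ((p x + q x) / 2) - Real.sqrt (q x)) ^ 2) μ) :
    (∫ x, Real.log ((p x + q x) / (2 * q x)) * q x ∂μ ≤
      -∫ x, (Real.sqrt ((p x + q x) / 2) - Real.sqrt (q x)) ^ 2 ∂μ +
        (1 / 2) * ((∫ x, p x ∂μ) - 1)) ∧
    ((∫ x, p x ∂μ) = 1 →
      (∫ x, Real.log ((p x + q x) / (2 * q x)) * q x ∂μ ≤
        -∫ x, (Real.sqrt ((p x + q x) / 2) - Real.sqrt (q x)) ^ 2 ∂μ) ∧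
      -∫ x, (Real.sqrt ((p x + q x) / 2) - Real.sqrt (q x)) ^ 2 ∂μ ≤ 0) :=
  hellinger_log_bound_general μ p q hp0 hq01 hqint hpint hlogint hsqint
end

section
/- Let X be a random vector in ℝ^k with bounded support and E[X̄X̄'] positive definite, where X̄ = (1, X')'. Let Ψ be continuous and strictly increasing. If (θ_m) is a sequence in ℝ^{1+k} such that E[(Ψ(X̄'θ_m) − Ψ(X̄'θ₀))²] → 0 and (θ_m) is bounded, then θ_m → θ₀. -/
open MeasureTheory Filter Topology
open scoped RealInnerProductSpace

/-! The criterion `θ ↦ E[(Ψ(X̄'θ) − Ψ(X̄'θ₀))²]` is continuous, by dominated convergence: `X̄` is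
bounded and `Ψ` is bounded on bounded intervals. Since `Ψ` is injective and `E[X̄X̄']` is positive
definite, it vanishes only at `θ₀`. The bounded sequence `θ_m` lies in a compact ball, so every
cluster point of it is a zero of the criterion, i.e. equals `θ₀`. -/

theorem IsCompact.tendsto_nhds_of_tendsto_comp {X Y α : Type*} [TopologicalSpace X]
    [TopologicalSpace Y] [T2Space Y] {s : Set X} (hs : IsCompact s) {f : X → Y}
    (hf : Continuous f) {x₀ : X} {y₀ : Y} (hf_eq : ∀ x ∈ s, f x = y₀ → x = x₀)
    {l : Filter α} {u : α → X} (hu : ∀ᶠ a in l, u a ∈ s) (hfu : Tendsto (f ∘ u) l (𝓝 y₀)) :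
    Tendsto u l (𝓝 x₀) :=
  hs.tendsto_nhds_of_unique_mapClusterPt hu fun x hx hux => hf_eq x hx <|
    eq_of_nhds_neBot (ClusterPt.mono (hux.continuousAt_comp hf.continuousAt) hfu).neBot

theorem measurable_of_fin_cons {Ω : Type*} [MeasurableSpace Ω] {k : ℕ}
    {X : Ω → EuclideanSpace ℝ (Fin k)} (hX : Measurable X)
    {Xbar : Ω → EuclideanSpace ℝ (Fin (k + 1))}
    (hXbar : ∀ ω, Xbar ω 0 = 1 ∧ ∀ j : Fin k, Xbar ω j.succ = X ω j) : Measurable Xbar := by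
  refine (WithLp.measurable_toLp 2 _).comp (measurable_pi_iff.2 fun j => ?_)
  cases j using Fin.cases with
  | zero => simp only [fun ω => (hXbar ω).1]; exact measurable_const
  | succ j =>
    simp only [fun ω => (hXbar ω).2 j]
    exact (measurable_pi_apply j).comp ((WithLp.measurable_ofLp _ _).comp hX)

theorem norm_le_one_add_norm_of_fin_cons {k : ℕ} {x : EuclideanSpace ℝ (Fin k)}
    {y : EuclideanSpace ℝ (Fin (k + 1))} (hy : y 0 = 1 ∧ ∀ j : Fin k, y j.succ = x j) :
    ‖y‖ ≤ 1 + ‖x‖ := by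
  have hsq : ‖y‖ ^ 2 = 1 + ‖x‖ ^ 2 := by
    simp only [EuclideanSpace.real_norm_sq_eq, Fin.sum_univ_succ, hy.1, hy.2, one_pow]
  nlinarith [norm_nonneg x, norm_nonneg y]

section LinkCriterion

variable {Ω E : Type*} [NormedAddCommGroup E] [InnerProductSpace ℝ E] {Z : Ω → E} {Ψ : ℝ → ℝ}

theorem exists_bound_linkCriterion_integrand (hΨ : Continuous Ψ) {C : ℝ}
    (hZ : ∀ ω, ‖Z ω‖ ≤ C) (R : ℝ) :
    ∃ K, ∀ θ θ' : E, ‖θ‖ ≤ R → ‖θ'‖ ≤ R → ∀ ω, ‖(Ψ ⟪Z ω, θ⟫ - Ψ ⟪Z ω, θ'⟫) ^ 2‖ ≤ K := by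
  obtain ⟨K, hK⟩ :=
    (isCompact_closedBall (0 : ℝ) (C * R)).exists_bound_of_continuousOn hΨ.continuousOn
  have hΨK : ∀ θ : E, ‖θ‖ ≤ R → ∀ ω, |Ψ ⟪Z ω, θ⟫| ≤ K := fun θ hθ ω =>
    hK _ <| mem_closedBall_zero_iff.2 <| (norm_inner_le_norm _ _).trans <|
      mul_le_mul (hZ ω) hθ (norm_nonneg _) ((norm_nonneg _).trans (hZ ω))
  refine ⟨(2 * K) ^ 2, fun θ θ' hθ hθ' ω => ?_⟩
  rw [norm_pow, Real.norm_eq_abs]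
  have := abs_sub (Ψ ⟪Z ω, θ⟫) (Ψ ⟪Z ω, θ'⟫)
  exact pow_le_pow_left₀ (abs_nonneg _) (by linarith [hΨK θ hθ ω, hΨK θ' hθ' ω]) 2

variable [MeasurableSpace Ω] {μ : Measure Ω}

noncomputable def linkCriterion (μ : Measure Ω) (Z : Ω → E) (Ψ : ℝ → ℝ) (θ₀ θ : E) : ℝ :=
  ∫ ω, (Ψ ⟪Z ω, θ⟫ - Ψ ⟪Z ω, θ₀⟫) ^ 2 ∂μ

theorem aestronglyMeasurable_linkCriterion_integrand (hZ : AEStronglyMeasurable Z μ)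
    (hΨ : Continuous Ψ) (θ₀ θ : E) :
    AEStronglyMeasurable (fun ω => (Ψ ⟪Z ω, θ⟫ - Ψ ⟪Z ω, θ₀⟫) ^ 2) μ :=
  ((hΨ.comp_aestronglyMeasurable (hZ.inner aestronglyMeasurable_const)).sub
    (hΨ.comp_aestronglyMeasurable (hZ.inner aestronglyMeasurable_const))).pow 2

theorem eq_of_linkCriterion_eq_zero {θ₀ θ : E}
    (hint : Integrable (fun ω => (Ψ ⟪Z ω, θ⟫ - Ψ ⟪Z ω, θ₀⟫) ^ 2) μ) (hΨ : Function.Injective Ψ)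
    (hpos : ∀ v : E, v ≠ 0 → 0 < ∫ ω, ⟪Z ω, v⟫ ^ 2 ∂μ) (h : linkCriterion μ Z Ψ θ₀ θ = 0) :
    θ = θ₀ := by
  have hae : ∀ᵐ ω ∂μ, ⟪Z ω, θ - θ₀⟫ ^ 2 = 0 := by
    filter_upwards [(integral_eq_zero_iff_of_nonneg (fun ω => sq_nonneg _) hint).1 h] with ω hω
    rw [inner_sub_right, hΨ (sub_eq_zero.1 (pow_eq_zero_iff two_ne_zero |>.1 hω)), sub_self,
      zero_pow two_ne_zero]
  by_contra hne
  exact (hpos _ (sub_ne_zero.2 hne)).ne' (integral_eq_zero_of_ae hae)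

variable [IsFiniteMeasure μ]

theorem integrable_linkCriterion_integrand (hZm : AEStronglyMeasurable Z μ) {C : ℝ}
    (hZ : ∀ ω, ‖Z ω‖ ≤ C) (hΨ : Continuous Ψ) (θ₀ θ : E) :
    Integrable (fun ω => (Ψ ⟪Z ω, θ⟫ - Ψ ⟪Z ω, θ₀⟫) ^ 2) μ := by
  obtain ⟨K, hK⟩ := exists_bound_linkCriterion_integrand hΨ hZ (max ‖θ‖ ‖θ₀‖)
  exact .of_bound (aestronglyMeasurable_linkCriterion_integrand hZm hΨ θ₀ θ) K <|
    .of_forall <| hK θ θ₀ (le_max_left _ _) (le_max_right _ _)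

theorem continuous_linkCriterion (hZm : AEStronglyMeasurable Z μ) {C : ℝ}
    (hZ : ∀ ω, ‖Z ω‖ ≤ C) (hΨ : Continuous Ψ) (θ₀ : E) :
    Continuous (linkCriterion μ Z Ψ θ₀) := by
  refine continuous_iff_continuousAt.2 fun θ => ?_
  obtain ⟨K, hK⟩ := exists_bound_linkCriterion_integrand hΨ hZ (max (‖θ‖ + 1) ‖θ₀‖)
  have hnear : ∀ᶠ θ' in 𝓝 θ, ‖θ'‖ ≤ max (‖θ‖ + 1) ‖θ₀‖ :=
    ((continuous_norm.tendsto θ).eventually (gt_mem_nhds (lt_add_one ‖θ‖))).mono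
      fun θ' h => h.le.trans (le_max_left _ _)
  refine continuousAt_of_dominated (bound := fun _ => K)
    (.of_forall (aestronglyMeasurable_linkCriterion_integrand hZm hΨ θ₀))
    (hnear.mono fun θ' h => .of_forall (hK θ' θ₀ h (le_max_right _ _))) (integrable_const K)
    (.of_forall fun ω => ?_)
  exact (((hΨ.comp (continuous_const.inner continuous_id)).sub continuous_const).pow 2).continuousAt

end LinkCriterion

/-- Identification: if `X` has bounded support, `E[X̄X̄']` is positive definite
(i.e. `E[⟪X̄, v⟫²] > 0` for every `v ≠ 0`, where `X̄ = (1, X')'`), `Ψ` is continuous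
and strictly increasing, `(θ_m)` is bounded and `E[(Ψ(⟪X̄, θ_m⟫) − Ψ(⟪X̄, θ₀⟫))²] → 0`,
then `θ_m → θ₀`. -/
theorem identification_distribution_regression {k : ℕ}
    {Ω : Type*} [MeasurableSpace Ω] (μ : Measure Ω) [IsProbabilityMeasure μ]
    (X : Ω → EuclideanSpace ℝ (Fin k)) (hX : Measurable X)
    (hXbdd : ∃ M : ℝ, ∀ ω, ‖X ω‖ ≤ M)
    (Xbar : Ω → EuclideanSpace ℝ (Fin (k + 1)))
    (hXbar : ∀ ω, Xbar ω 0 = 1 ∧ ∀ j : Fin k, Xbar ω j.succ = X ω j)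
    (hposdef : ∀ v : EuclideanSpace ℝ (Fin (k + 1)), v ≠ 0 →
      0 < ∫ ω, ⟪Xbar ω, v⟫ ^ 2 ∂μ)
    (Ψ : ℝ → ℝ) (hΨcont : Continuous Ψ) (hΨmono : StrictMono Ψ)
    (θm : ℕ → EuclideanSpace ℝ (Fin (k + 1))) (θ₀ : EuclideanSpace ℝ (Fin (k + 1)))
    (hθbdd : ∃ B : ℝ, ∀ m, ‖θm m‖ ≤ B)
    (hcrit : Filter.Tendsto
      (fun m => ∫ ω, (Ψ ⟪Xbar ω, θm m⟫ - Ψ ⟪Xbar ω, θ₀⟫) ^ 2 ∂μ)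
      Filter.atTop (nhds 0)) :
    Filter.Tendsto θm Filter.atTop (nhds θ₀) := by
  obtain ⟨M, hM⟩ := hXbdd
  obtain ⟨B, hB⟩ := hθbdd
  have hXbar_meas : AEStronglyMeasurable Xbar μ :=
    (measurable_of_fin_cons hX hXbar).aestronglyMeasurable
  have hXbar_bdd : ∀ ω, ‖Xbar ω‖ ≤ 1 + M := fun ω =>
    (norm_le_one_add_norm_of_fin_cons (hXbar ω)).trans (add_le_add_right (hM ω) 1)
  exact (isCompact_closedBall 0 B).tendsto_nhds_of_tendsto_comp
    (continuous_linkCriterion hXbar_meas hXbar_bdd hΨcont θ₀)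
    (fun θ _ hθ => eq_of_linkCriterion_eq_zero
      (integrable_linkCriterion_integrand hXbar_meas hXbar_bdd hΨcont θ₀ θ)
      hΨmono.injective hposdef hθ)
    (.of_forall fun m => mem_closedBall_zero_iff.2 (hB m)) hcrit
end
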